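/- Let m_n := 2·(2n)!·3^n / ((n+2)!·n!) for n ∈ ℕ. For every real z with 0 < z < 1/12, the series Σ_{n≥0} m_n·z^n converges and Σ_{n≥0} m_n·z^n = (18z − 1 + (1−12z)^{3/2}) / (54z²). -/

import Mathlib

/-!
Since `(2n)! = (n+1)·Cₙ·n!²`, Tutte's numbers are `mₙ = 2·3ⁿ·Cₙ/(n+2)` with `Cₙ` the Catalan
numbers. The Catalan generating function satisfies `C = 1 + x·C²`, so `(1 - 2x·C(x))² = 1 - 4x`,
and since `1 - 2x·C(x)` cannot vanish and equals `1` at `x = 0`, `√(1-4x) = 1 - 2x·C(x)`.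
The recurrence `(n+2)·Cₙ₊₁ = (4n+2)·Cₙ` turns into the linear relation
`9z·M(z) = (12z-1)·C(3z) + 1` for `M(z) = ∑ mₙzⁿ`, and substituting `C(3z) = (1-√(1-12z))/(6z)`
gives the closed form.
-/

open Nat Filter Real

theorem catalan_le_centralBinom (n : ℕ) : catalan n ≤ n.centralBinom :=
  succ_mul_catalan_eq_centralBinom n ▸ Nat.le_mul_of_pos_left _ n.succ_pos

theorem catalan_le_four_pow (n : ℕ) : catalan n ≤ 4 ^ n :=
  (catalan_le_centralBinom n).trans (centralBinom_le_four_pow n)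

theorem add_two_mul_catalan_succ (n : ℕ) :
    (n + 2) * catalan (n + 1) = (4 * n + 2) * catalan n := by
  refine Nat.eq_of_mul_eq_mul_left n.succ_pos ?_
  calc (n + 1) * ((n + 2) * catalan (n + 1))
      = (n + 1) * ((n + 1 + 1) * catalan (n + 1)) := by ring
    _ = 2 * (2 * n + 1) * ((n + 1) * catalan n) := by
      rw [succ_mul_catalan_eq_centralBinom, succ_mul_catalan_eq_centralBinom,
        succ_mul_centralBinom_succ]
    _ = (n + 1) * ((4 * n + 2) * catalan n) := by ring

theorem factorial_two_mul_eq_catalan (n : ℕ) :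
    (2 * n)! = (n + 1) * catalan n * (n ! * n !) := by
  rw [succ_mul_catalan_eq_centralBinom, centralBinom_eq_two_mul_choose, ← mul_assoc]
  conv_rhs => enter [2]; rw [show n = 2 * n - n by omega]
  exact (Nat.choose_mul_factorial_mul_factorial (by omega)).symm

theorem summable_catalan_mul_pow {x : ℝ} (hx : |x| < 1 / 4) :
    Summable (fun n : ℕ => (catalan n : ℝ) * x ^ n) := by
  refine Summable.of_norm_bounded
    (summable_geometric_of_lt_one (by positivity) (by linarith : 4 * |x| < 1)) fun n => ?_
  rw [norm_mul, norm_pow, Real.norm_natCast, Real.norm_eq_abs, mul_pow]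
  gcongr
  exact_mod_cast catalan_le_four_pow n

noncomputable def catalanGF (x : ℝ) : ℝ := ∑' n : ℕ, (catalan n : ℝ) * x ^ n

theorem catalanGF_eq_one_add_mul_sq {x : ℝ} (hx : |x| < 1 / 4) :
    catalanGF x = 1 + x * catalanGF x ^ 2 := by
  have hs := summable_catalan_mul_pow hx
  have hsq : catalanGF x ^ 2 = ∑' n : ℕ, (catalan (n + 1) : ℝ) * x ^ n := by
    rw [sq, catalanGF, hs.tsum_mul_tsum_eq_tsum_sum_antidiagonal hs
      (summable_mul_of_summable_norm hs.norm hs.norm)]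
    refine tsum_congr fun n => ?_
    rw [catalan_succ', Nat.cast_sum, Finset.sum_mul]
    refine Finset.sum_congr rfl fun p hp => ?_
    rw [← Finset.HasAntidiagonal.mem_antidiagonal.mp hp, pow_add]
    push_cast
    ring
  rw [hsq, ← tsum_mul_left, catalanGF, hs.tsum_eq_zero_add]
  simp only [catalan_zero, Nat.cast_one, pow_zero, mul_one, pow_succ]
  exact congrArg (1 + ·) (tsum_congr fun n => by ring)

theorem continuousOn_catalanGF {r : ℝ} (hr : |r| < 1 / 4) :
    ContinuousOn catalanGF (Set.Icc (-r) r) := by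
  refine continuousOn_tsum (fun n => (continuous_const.mul (continuous_pow n)).continuousOn)
    (summable_catalan_mul_pow (x := |r|) (by rwa [abs_abs])) fun n y hy => ?_
  rw [norm_mul, norm_pow, Real.norm_natCast, Real.norm_eq_abs]
  exact mul_le_mul_of_nonneg_left
    (pow_le_pow_left₀ (abs_nonneg y) ((abs_le.mpr hy).trans (le_abs_self r)) n) (by positivity)

theorem sqrt_one_sub_four_mul_eq {x : ℝ} (hx : |x| < 1 / 4) :
    √(1 - 4 * x) = 1 - 2 * x * catalanGF x := by
  have hsq : ∀ y, |y| < 1 / 4 → (1 - 2 * y * catalanGF y) ^ 2 = 1 - 4 * y := fun y hy => by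
    linear_combination (-4 * y) * catalanGF_eq_one_add_mul_sq hy
  suffices hpos : 0 < 1 - 2 * x * catalanGF x by
    rw [← hsq x hx, Real.sqrt_sq hpos.le]
  set s := Set.Icc (-|x|) |x|
  have hs : ∀ y ∈ s, |y| < 1 / 4 := fun y hy => (abs_le.mpr hy).trans_lt hx
  by_contra! hneg
  obtain ⟨y, hy, hy0⟩ := isPreconnected_Icc.intermediate_value (s := s) (a := x) (b := 0)
    (f := fun y => 1 - 2 * y * catalanGF y)
    ⟨neg_abs_le x, le_abs_self x⟩ ⟨by simp, abs_nonneg x⟩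
    (continuousOn_const.sub ((continuousOn_const.mul continuousOn_id).mul
      (continuousOn_catalanGF (r := |x|) (by rwa [abs_abs]))))
    ⟨hneg, by simp⟩
  beta_reduce at hy0
  have hzero := hsq y (hs y hy)
  rw [hy0] at hzero
  linarith [hs y hy, le_abs_self y]

noncomputable def tutteNumber (n : ℕ) : ℝ := 2 * (2 * n)! * 3 ^ n / ((n + 2)! * n !)

theorem tutteNumber_eq_catalan (n : ℕ) :
    tutteNumber n = 2 * 3 ^ n * catalan n / (n + 2) := by
  have hfac : ((n + 2)! : ℝ) = (n + 2) * (n + 1) * n ! := by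
    push_cast [Nat.factorial_succ]
    ring
  rw [tutteNumber, factorial_two_mul_eq_catalan, hfac]
  push_cast
  field_simp

theorem summable_tutteNumber_mul_pow {z : ℝ} (hz : |z| < 1 / 12) :
    Summable (fun n : ℕ => tutteNumber n * z ^ n) := by
  have hC := (summable_catalan_mul_pow (x := |3 * z|)
    (by rw [abs_abs, abs_mul, Nat.abs_ofNat]; linarith)).mul_left 2
  refine hC.of_norm_bounded fun n => ?_
  have hm : 0 ≤ tutteNumber n := by rw [tutteNumber_eq_catalan]; positivity
  calc ‖tutteNumber n * z ^ n‖ = 2 * (catalan n * |3 * z| ^ n) / (n + 2) := by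
        rw [norm_mul, norm_pow, Real.norm_of_nonneg hm, Real.norm_eq_abs, tutteNumber_eq_catalan,
          abs_mul, Nat.abs_ofNat, mul_pow]
        ring
    _ ≤ 2 * (catalan n * |3 * z| ^ n) := div_le_self (by positivity) (le_add_of_nonneg_of_le n.cast_nonneg one_le_two)

theorem catalan_succ_mul_pow_eq (z : ℝ) (n : ℕ) :
    (catalan (n + 1) : ℝ) * (3 * z) ^ (n + 1)
      = 12 * z * (catalan n * (3 * z) ^ n) - 9 * z * (tutteNumber n * z ^ n) := by
  have hrec : ((n : ℝ) + 2) * catalan (n + 1) = (4 * n + 2) * catalan n := by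
    exact_mod_cast add_two_mul_catalan_succ n
  rw [tutteNumber_eq_catalan]
  field_simp
  linear_combination (3 * (3 * z) ^ n * z) * hrec

theorem nine_mul_tsum_tutteNumber {z : ℝ} (hz : |z| < 1 / 12) :
    9 * z * ∑' n : ℕ, tutteNumber n * z ^ n = (12 * z - 1) * catalanGF (3 * z) + 1 := by
  have hC := summable_catalan_mul_pow (x := 3 * z) (by rw [abs_mul, Nat.abs_ofNat]; linarith)
  have hshift := hC.tsum_eq_zero_add
  simp only [catalan_succ_mul_pow_eq, catalan_zero, Nat.cast_one, pow_zero, mul_one] at hshift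
  rw [Summable.tsum_sub (hC.mul_left _) ((summable_tutteNumber_mul_pow hz).mul_left _), tsum_mul_left,
    tsum_mul_left] at hshift
  rw [catalanGF]
  linarith

theorem tutte_generating_function (z : ℝ) (hz0 : 0 < z) (hz1 : z < 1 / 12) :
    Summable (fun n : ℕ => (2 * (2 * n)! * 3 ^ n / ((n + 2)! * n !) : ℝ) * z ^ n) ∧
    (∑' n : ℕ, (2 * (2 * n)! * 3 ^ n / ((n + 2)! * n !) : ℝ) * z ^ n)
      = (18 * z - 1 + (1 - 12 * z) ^ ((3 : ℝ) / 2)) / (54 * z ^ 2) := by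
  have hz : |z| < 1 / 12 := abs_lt.mpr ⟨by linarith, hz1⟩
  have hsqrt : √(1 - 12 * z) = 1 - 6 * z * catalanGF (3 * z) := by
    rw [show 1 - 12 * z = 1 - 4 * (3 * z) by ring,
      sqrt_one_sub_four_mul_eq (by rw [abs_mul, Nat.abs_ofNat]; linarith)]
    ring
  have hrpow : (1 - 12 * z) ^ ((3 : ℝ) / 2) = (1 - 12 * z) * √(1 - 12 * z) := by
    rw [show (3 : ℝ) / 2 = 1 + 1 / 2 by norm_num, Real.rpow_add' (by linarith) (by norm_num),
      Real.rpow_one, Real.sqrt_eq_rpow]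
  refine ⟨summable_tutteNumber_mul_pow hz, ?_⟩
  change ∑' n : ℕ, tutteNumber n * z ^ n = _
  rw [hrpow, hsqrt, eq_div_iff (by positivity)]
  linear_combination (6 * z) * nine_mul_tsum_tutteNumber hz
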